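/- arXiv:1407.7222 — 4 statements merged into one kernel-verified Lean document; each statement's English description precedes it below -/
import Mathlib

section
/- Let H be a real Hilbert space, V a real Banach space, and j : V → H an injective continuous linear map with dense range. Let A : V → V* satisfy the coercivity condition: there exist r > 0, c₁, c₃ ∈ ℝ, c₂ > 0 with 2⟨A(v), v⟩ ≤ c₁ − c₂·‖v‖_V^{r+1} + c₃·|j v|² for all v ∈ V. Fix λ ∈ ℝ with λ ≥ c₃/2, a point x ∈ H, and n ≥ 1. Suppose xₙ ∈ V and hₙ ∈ H satisfy ⟨A(xₙ), v⟩ = ⟪hₙ, j v⟫ for all v ∈ V and the resolvent equation j xₙ + (1/n)·(λ·j xₙ − hₙ) = x in H. Then |j xₙ|² + (c₂/(2n))·‖xₙ‖_V^{r+1} ≤ |x|·|j xₙ| + c₁/(2n). -/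
open scoped RealInnerProductSpace

/-! Pairing the resolvent equation with `j xₙ` gives
`⟪x, j xₙ⟫ = |j xₙ|² + (λ |j xₙ|² - ⟨A xₙ, xₙ⟩) / n`; coercivity together with `c₃ ≤ 2λ` bounds the
bracket below by `(c₂ ‖xₙ‖^(r+1) - c₁) / 2`, and Cauchy–Schwarz bounds the left side by `|x| |j xₙ|`. -/

theorem real_inner_add_smul_sub_self {H : Type*} [NormedAddCommGroup H] [InnerProductSpace ℝ H]
    (u h : H) (t lam : ℝ) :
    ⟪u + t • (lam • u - h), u⟫ = ‖u‖ ^ 2 + t * (lam * ‖u‖ ^ 2 - ⟪h, u⟫) := by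
  simp only [inner_add_left, inner_smul_left, inner_sub_left, real_inner_self_eq_norm_sq,
    RCLike.conj_to_real]

theorem resolvent_apriori_bound_general
    {H V : Type*}
    [NormedAddCommGroup H] [InnerProductSpace ℝ H]
    [NormedAddCommGroup V] [NormedSpace ℝ V]
    (j : V →L[ℝ] H)
    (A : V → StrongDual ℝ V)
    (r c₁ c₂ c₃ : ℝ)
    (hcoer : ∀ v : V, 2 * A v v ≤ c₁ - c₂ * ‖v‖ ^ (r + 1) + c₃ * ‖j v‖ ^ 2)
    (lam : ℝ) (hlam : c₃ / 2 ≤ lam)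
    (x : H) (n : ℕ) (xₙ : V) (hₙ : H)
    (hrep : ∀ v : V, A xₙ v = ⟪hₙ, j v⟫)
    (hres : j xₙ + (1 / (n : ℝ)) • (lam • j xₙ - hₙ) = x) :
    ‖j xₙ‖ ^ 2 + (c₂ / (2 * n)) * ‖xₙ‖ ^ (r + 1) ≤ ‖x‖ * ‖j xₙ‖ + c₁ / (2 * n) := by
  have pairing : ⟪x, j xₙ⟫ = ‖j xₙ‖ ^ 2 + (1 / (n : ℝ)) * (lam * ‖j xₙ‖ ^ 2 - A xₙ xₙ) := by
    rw [← hres, real_inner_add_smul_sub_self, hrep]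
  have coercive : c₂ / 2 * ‖xₙ‖ ^ (r + 1) - c₁ / 2 ≤ lam * ‖j xₙ‖ ^ 2 - A xₙ xₙ := by
    linarith [hcoer xₙ, mul_le_mul_of_nonneg_right hlam (sq_nonneg ‖j xₙ‖)]
  have bound : ‖j xₙ‖ ^ 2 + (1 / (n : ℝ)) * (c₂ / 2 * ‖xₙ‖ ^ (r + 1) - c₁ / 2) ≤ ‖x‖ * ‖j xₙ‖ :=
    calc _ ≤ ⟪x, j xₙ⟫ := by rw [pairing]; gcongr
      _ ≤ ‖x‖ * ‖j xₙ‖ := real_inner_le_norm x (j xₙ)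
  have rescale : (1 / (n : ℝ)) * (c₂ / 2 * ‖xₙ‖ ^ (r + 1) - c₁ / 2)
      = c₂ / (2 * n) * ‖xₙ‖ ^ (r + 1) - c₁ / (2 * n) := by ring
  linarith

/-- The a priori resolvent bound (bound_x_n) in the proof of Lemma 2.4:
pairing the resolvent equation for `Ã = λ I − A` with `xₙ` and using coercivity. -/
theorem resolvent_apriori_bound
    {H V : Type*}
    [NormedAddCommGroup H] [InnerProductSpace ℝ H] [CompleteSpace H]
    [NormedAddCommGroup V] [NormedSpace ℝ V] [CompleteSpace V]
    (j : V →L[ℝ] H) (hj_inj : Function.Injective j) (hj_dense : DenseRange j)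
    (A : V → StrongDual ℝ V)
    (r c₁ c₂ c₃ : ℝ) (hr : 0 < r) (hc₂ : 0 < c₂)
    (hcoer : ∀ v : V, 2 * A v v ≤ c₁ - c₂ * ‖v‖ ^ (r + 1) + c₃ * ‖j v‖ ^ 2)
    (lam : ℝ) (hlam : c₃ / 2 ≤ lam)
    (x : H) (n : ℕ) (hn : 1 ≤ n) (xₙ : V) (hₙ : H)
    (hrep : ∀ v : V, A xₙ v = ⟪hₙ, j v⟫)
    (hres : j xₙ + (1 / (n : ℝ)) • (lam • j xₙ - hₙ) = x) :
    ‖j xₙ‖ ^ 2 + (c₂ / (2 * n)) * ‖xₙ‖ ^ (r + 1) ≤ ‖x‖ * ‖j xₙ‖ + c₁ / (2 * n) :=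
  resolvent_apriori_bound_general j A r c₁ c₂ c₃ hcoer lam hlam x n xₙ hₙ hrep hres
end

section
/- For every real number t > 0, |1 − t| ≤ t·log(t) + 2·min(|log t|, 1). -/
/-! For `t > 0` we have `t - 1 ≤ t log t` and `1 - t ≤ m := min |log t| 1`. The first bounds
`t - 1` since `m ≥ 0`; combined, they give `t log t + 2m ≥ (t - 1) + 2m ≥ m ≥ 1 - t`. -/

open Real

theorem one_sub_le_min_abs_log_one {t : ℝ} (ht : 0 < t) : 1 - t ≤ min |log t| 1 :=
  le_min (by linarith [log_le_sub_one_of_pos ht, neg_le_abs (log t)]) (by linarith)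

/-- Pointwise inequality `|1 − t| ≤ t log t + 2(|log t| ∧ 1)` for `t > 0`, used in
the proofs of Lemmas 2.1 and 2.2 to bound `|1 − R|` by entropy quantities. -/
theorem abs_one_sub_le_entropy (t : ℝ) (ht : 0 < t) :
    |1 - t| ≤ t * Real.log t + 2 * min |Real.log t| 1 := by
  have h_mul_log : t - 1 ≤ t * log t := self_sub_one_le_mul_log ht.le
  have h_min : 1 - t ≤ min |log t| 1 := one_sub_le_min_abs_log_one ht
  have h_min_nonneg : 0 ≤ min |log t| 1 := le_min (abs_nonneg _) zero_le_one
  rw [abs_le']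
  constructor <;> linarith
end

section
/- Let (Ω, F, P) be a probability space and R : Ω → ℝ a measurable function with R > 0 almost surely, such that R, R·log R and log R are all integrable. Then E|1 − R| ≤ E[R·log R] + 2·E|log R|. -/
open MeasureTheory

theorem Real.abs_one_sub_le_mul_log_add_two_mul_abs_log {t : ℝ} (ht : 0 < t) :
    |1 - t| ≤ t * Real.log t + 2 * |Real.log t| := by
  rcases le_or_gt 1 t with h1t | ht1
  · have hlog : 0 ≤ Real.log t := Real.log_nonneg h1t
    have hinv : 1 - t⁻¹ ≤ Real.log t := Real.one_sub_inv_le_log_of_pos ht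
    have hsub : t - 1 ≤ t * Real.log t := by
      calc t - 1 = t * (1 - t⁻¹) := by field_simp
        _ ≤ t * Real.log t := mul_le_mul_of_nonneg_left hinv ht.le
    rw [abs_of_nonpos (by linarith), abs_of_nonneg hlog]
    linarith
  · have hlog : Real.log t ≤ 0 := Real.log_nonpos ht.le ht1.le
    have hsub : Real.log t ≤ t - 1 := Real.log_le_sub_one_of_pos ht
    have hmul : Real.log t ≤ t * Real.log t := by nlinarith
    rw [abs_of_nonneg (by linarith), abs_of_nonpos hlog]
    linarith

theorem expectation_abs_one_sub_le_entropy_general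
    {Ω : Type*} [MeasurableSpace Ω] (P : Measure Ω) [IsProbabilityMeasure P]
    (R : Ω → ℝ) (hpos : ∀ᵐ ω ∂P, 0 < R ω)
    (hent : Integrable (fun ω => R ω * Real.log (R ω)) P)
    (hlog : Integrable (fun ω => Real.log (R ω)) P) :
    ∫ ω, |1 - R ω| ∂P ≤
      (∫ ω, R ω * Real.log (R ω) ∂P) + 2 * ∫ ω, |Real.log (R ω)| ∂P := by
  have hbound : Integrable (fun ω => R ω * Real.log (R ω) + 2 * |Real.log (R ω)|) P :=
    hent.add (hlog.abs.const_mul 2)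
  calc ∫ ω, |1 - R ω| ∂P
      ≤ ∫ ω, (R ω * Real.log (R ω) + 2 * |Real.log (R ω)|) ∂P :=
        integral_mono_of_nonneg (.of_forall fun _ => abs_nonneg _) hbound
          (hpos.mono fun _ => Real.abs_one_sub_le_mul_log_add_two_mul_abs_log)
    _ = (∫ ω, R ω * Real.log (R ω) ∂P) + 2 * ∫ ω, |Real.log (R ω)| ∂P := by
        rw [integral_add hent (hlog.abs.const_mul 2), integral_const_mul]

/-- The entropy estimate `E|1 − R| ≤ E[R log R] + 2 E|log R|` used in Lemmas 2.1
and 2.2 to control `E|1 − R_T|` for the Girsanov density `R_T`. -/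
theorem expectation_abs_one_sub_le_entropy
    {Ω : Type*} [MeasurableSpace Ω] (P : Measure Ω) [IsProbabilityMeasure P]
    (R : Ω → ℝ) (hR : Measurable R) (hpos : ∀ᵐ ω ∂P, 0 < R ω)
    (hint : Integrable R P)
    (hent : Integrable (fun ω => R ω * Real.log (R ω)) P)
    (hlog : Integrable (fun ω => Real.log (R ω)) P) :
    ∫ ω, |1 - R ω| ∂P ≤
      (∫ ω, R ω * Real.log (R ω) ∂P) + 2 * ∫ ω, |Real.log (R ω)| ∂P :=
  expectation_abs_one_sub_le_entropy_general P R hpos hent hlog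
end

section
/- Let H be a real Hilbert space, V a real Banach space, and j : V → H an injective continuous linear map with dense range and operator norm M. Let A : V → V* satisfy, for some r > 0, c₁, c₃ ∈ ℝ, c₂ > 0, c₄ ∈ ℝ, c₅ ≥ 0: (coercivity) 2⟨A(v), v⟩ ≤ c₁ − c₂·‖v‖_V^{r+1} + c₃·|j v|² for all v ∈ V, and (growth) |⟨A(u), v⟩| ≤ c₄ + c₅·(‖u‖_V^r + ‖v‖_V^{r+1} + |j u|² + |j v|²) for all u, v ∈ V. Fix λ ≥ max(c₃/2, 0) and x ∈ H, and suppose that for every n ≥ 1 there are xₙ ∈ V and hₙ ∈ H with ⟨A(xₙ), v⟩ = ⟪hₙ, j v⟫ for all v ∈ V and j xₙ + (1/n)·(λ·j xₙ − hₙ) = x in H. Then sup_n |j xₙ| < ∞, and sup_{v ∈ V, ‖v‖_V ≤ 1} |⟪x − j xₙ, j v⟫| → 0 as n → ∞; that is, j xₙ converges to x in the dual norm of V*. -/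
/-!
Testing the resolvent equation `j xₙ + n⁻¹ (λ j xₙ - hₙ) = x` against `xₙ`, coercivity and
`λ ≥ c₃ / 2` give the energy inequality `|j xₙ|² + (c₂ ‖xₙ‖^(r+1) - c₁) / (2n) ≤ ⟪x, j xₙ⟫`.
It bounds `|j xₙ|` uniformly and gives `‖xₙ‖^(r+1) = O(n)`, so `‖xₙ‖^r = O(n^(r/(r+1))) = o(n)`.
On the unit ball of `V` the growth bound then makes `x - j xₙ = n⁻¹ (λ j xₙ - A xₙ)` of size
`O(n⁻¹ (1 + ‖xₙ‖^r)) = o(1)`.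
-/

open scoped RealInnerProductSpace
open Filter Asymptotics

theorem le_add_sqrt_of_sq_le_mul_add {a b t : ℝ} (ha : 0 ≤ a) (hb : 0 ≤ b)
    (h : t ^ 2 ≤ a * t + b) : t ≤ a + √b := by
  by_contra! hlt
  nlinarith [Real.sq_sqrt hb, Real.sqrt_nonneg b]

theorem isLittleO_natCast_rpow_of_lt_one {s : ℝ} (hs : s < 1) :
    (fun n : ℕ => (n : ℝ) ^ s) =o[atTop] (fun n : ℕ => (n : ℝ)) := by
  rw [isLittleO_iff_tendsto' (by filter_upwards [eventually_ne_atTop 0] with n hn h; simp_all)]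
  have hpow := (tendsto_rpow_neg_atTop (sub_pos.2 hs)).comp tendsto_natCast_atTop_atTop
  simp only [neg_sub, Function.comp_def] at hpow
  refine hpow.congr' ?_
  filter_upwards [eventually_ne_atTop 0] with n hn
  rw [Real.rpow_sub_one (Nat.cast_ne_zero.2 hn)]

theorem isLittleO_rpow_of_isBigO_rpow_add_one {a : ℕ → ℝ} {r : ℝ} (hr : 0 ≤ r)
    (ha : ∀ n, 0 ≤ a n) (h : (fun n => a n ^ (r + 1)) =O[atTop] (fun n : ℕ => (n : ℝ))) :
    (fun n => a n ^ r) =o[atTop] (fun n : ℕ => (n : ℝ)) := by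
  have hr1 : 0 < r + 1 := by linarith
  have hpow : ∀ n, a n ^ r = (a n ^ (r + 1)) ^ (r / (r + 1)) := fun n => by
    rw [← Real.rpow_mul (ha n), mul_div_cancel₀ _ hr1.ne']
  simp only [hpow]
  exact (h.rpow (div_nonneg hr hr1.le) (Eventually.of_forall fun n => Nat.cast_nonneg n))
    |>.trans_isLittleO (isLittleO_natCast_rpow_of_lt_one ((div_lt_one hr1).2 (lt_add_one r)))

theorem tendsto_ciSup_abs_of_le {α ι : Type*} [Nonempty ι] {l : Filter α} {f : α → ι → ℝ}
    {g : α → ℝ} (hfg : ∀ᶠ a in l, ∀ i, |f a i| ≤ g a) (hg : Tendsto g l (nhds 0)) :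
    Tendsto (fun a => ⨆ i, |f a i|) l (nhds 0) :=
  tendsto_of_tendsto_of_tendsto_of_le_of_le' tendsto_const_nhds hg
    (Eventually.of_forall fun _ => Real.iSup_nonneg fun _ => abs_nonneg _)
    (hfg.mono fun _ h => ciSup_le h)

section ResolventStep

variable {H V : Type*} [NormedAddCommGroup H] [InnerProductSpace ℝ H]
  [NormedAddCommGroup V] [NormedSpace ℝ V] {j : V →L[ℝ] H} {A : V → StrongDual ℝ V}
  {x h : H} {y : V} {lam τ r c₁ c₂ c₃ : ℝ}

theorem abs_apply_le_of_growth {c₄ c₅ : ℝ} (hc₅ : 0 ≤ c₅) (hr : 0 ≤ r + 1)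
    (hgrow : ∀ u v : V,
      |A u v| ≤ c₄ + c₅ * (‖u‖ ^ r + ‖v‖ ^ (r + 1) + ‖j u‖ ^ 2 + ‖j v‖ ^ 2))
    (u : V) {v : V} (hv : ‖v‖ ≤ 1) :
    |A u v| ≤ |c₄| + c₅ * (‖u‖ ^ r + 1 + ‖j u‖ ^ 2 + ‖j‖ ^ 2) := by
  have hjv : ‖j v‖ ≤ ‖j‖ := j.le_of_opNorm_le_of_le le_rfl hv |>.trans_eq (mul_one _)
  have hv' : ‖v‖ ^ (r + 1) ≤ 1 := Real.rpow_le_one (norm_nonneg _) hv hr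
  have hjv' : ‖j v‖ ^ 2 ≤ ‖j‖ ^ 2 := pow_le_pow_left₀ (norm_nonneg _) hjv 2
  refine (hgrow u v).trans ?_
  gcongr
  exact le_abs_self c₄

theorem inner_sub_eq_of_resolvent (hrep : ∀ v, A y v = ⟪h, j v⟫)
    (hres : j y + τ • (lam • j y - h) = x) (v : V) :
    ⟪x - j y, j v⟫ = τ * (lam * ⟪j y, j v⟫ - A y v) := by
  rw [← hres, add_sub_cancel_left, real_inner_smul_left, inner_sub_left, real_inner_smul_left,
    hrep]

theorem resolvent_energy_le (hrep : ∀ v, A y v = ⟪h, j v⟫)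
    (hres : j y + τ • (lam • j y - h) = x)
    (hcoer : 2 * A y y ≤ c₁ - c₂ * ‖y‖ ^ (r + 1) + c₃ * ‖j y‖ ^ 2) (hlam : c₃ / 2 ≤ lam)
    (hτ : 0 ≤ τ) :
    ‖j y‖ ^ 2 + τ * (c₂ * ‖y‖ ^ (r + 1) - c₁) / 2 ≤ ⟪x, j y⟫ := by
  have htest := inner_sub_eq_of_resolvent hrep hres y
  rw [inner_sub_left, real_inner_self_eq_norm_sq] at htest
  have hdissip : (c₂ * ‖y‖ ^ (r + 1) - c₁) / 2 ≤ lam * ‖j y‖ ^ 2 - A y y := by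
    nlinarith [sq_nonneg ‖j y‖]
  nlinarith [mul_le_mul_of_nonneg_left hdissip hτ]

theorem norm_le_of_resolvent (hrep : ∀ v, A y v = ⟪h, j v⟫)
    (hres : j y + τ • (lam • j y - h) = x)
    (hcoer : 2 * A y y ≤ c₁ - c₂ * ‖y‖ ^ (r + 1) + c₃ * ‖j y‖ ^ 2) (hlam : c₃ / 2 ≤ lam)
    (hc₂ : 0 ≤ c₂) (hτ₀ : 0 ≤ τ) (hτ₁ : τ ≤ 1) :
    ‖j y‖ ≤ ‖x‖ + √(|c₁| / 2) := by
  have henergy := resolvent_energy_le hrep hres hcoer hlam hτ₀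
  have hcs := real_inner_le_norm x (j y)
  have hpos : 0 ≤ τ * (c₂ * ‖y‖ ^ (r + 1)) := by positivity
  have hc₁ : τ * c₁ ≤ |c₁| := by nlinarith [le_abs_self c₁, abs_nonneg c₁]
  exact le_add_sqrt_of_sq_le_mul_add (norm_nonneg x) (by positivity) (by nlinarith)

theorem rpow_norm_le_of_resolvent (hrep : ∀ v, A y v = ⟪h, j v⟫)
    (hres : j y + τ • (lam • j y - h) = x)
    (hcoer : 2 * A y y ≤ c₁ - c₂ * ‖y‖ ^ (r + 1) + c₃ * ‖j y‖ ^ 2) (hlam : c₃ / 2 ≤ lam)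
    (hc₂ : 0 < c₂) (hτ₀ : 0 < τ) (hτ₁ : τ ≤ 1) :
    ‖y‖ ^ (r + 1) ≤ (‖x‖ ^ 2 / 2 + |c₁|) / (c₂ * τ) := by
  have henergy := resolvent_energy_le hrep hres hcoer hlam hτ₀.le
  have hcs := real_inner_le_norm x (j y)
  have hc₁ : τ * c₁ ≤ |c₁| := by nlinarith [le_abs_self c₁, abs_nonneg c₁]
  rw [le_div_iff₀ (by positivity)]
  nlinarith [sq_nonneg (‖j y‖ - ‖x‖ / 2), mul_le_mul_of_nonneg_right hτ₁ (sq_nonneg ‖x‖)]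

theorem abs_inner_sub_le_of_resolvent (hrep : ∀ v, A y v = ⟪h, j v⟫)
    (hres : j y + τ • (lam • j y - h) = x) {c₄ c₅ M : ℝ} (hc₅ : 0 ≤ c₅) (hr : 0 ≤ r + 1)
    (hgrow : ∀ u v : V,
      |A u v| ≤ c₄ + c₅ * (‖u‖ ^ r + ‖v‖ ^ (r + 1) + ‖j u‖ ^ 2 + ‖j v‖ ^ 2))
    (hτ : 0 ≤ τ) (hM : ‖j y‖ ≤ M) {v : V} (hv : ‖v‖ ≤ 1) :
    |⟪x - j y, j v⟫| ≤
      τ * (|lam| * M * ‖j‖ + |c₄| + c₅ * (1 + M ^ 2 + ‖j‖ ^ 2) + c₅ * ‖y‖ ^ r) := by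
  have hjv : ‖j v‖ ≤ ‖j‖ := j.le_of_opNorm_le_of_le le_rfl hv |>.trans_eq (mul_one _)
  have hA := abs_apply_le_of_growth hc₅ hr hgrow y hv
  have hM2 : ‖j y‖ ^ 2 ≤ M ^ 2 := pow_le_pow_left₀ (norm_nonneg _) hM 2
  rw [inner_sub_eq_of_resolvent hrep hres, abs_mul, abs_of_nonneg hτ]
  gcongr
  calc |lam * ⟪j y, j v⟫ - A y v| ≤ |lam| * (‖j y‖ * ‖j v‖) + |A y v| := by
        grw [abs_sub, abs_mul, abs_real_inner_le_norm]
    _ ≤ |lam| * (M * ‖j‖) + (|c₄| + c₅ * (‖y‖ ^ r + 1 + M ^ 2 + ‖j‖ ^ 2)) := by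
        have hM₀ : 0 ≤ M := (norm_nonneg _).trans hM
        gcongr
        exact hA.trans (by gcongr)
    _ = _ := by ring

end ResolventStep

theorem resolvent_approximants_bounded_and_converge_general
    {H V : Type*}
    [NormedAddCommGroup H] [InnerProductSpace ℝ H]
    [NormedAddCommGroup V] [NormedSpace ℝ V]
    (j : V →L[ℝ] H)
    (A : V → StrongDual ℝ V)
    (r c₁ c₂ c₃ : ℝ) (hr : 0 < r) (hc₂ : 0 < c₂)
    (hcoer : ∀ v : V, 2 * A v v ≤ c₁ - c₂ * ‖v‖ ^ (r + 1) + c₃ * ‖j v‖ ^ 2)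
    (c₄ c₅ : ℝ) (hc₅ : 0 ≤ c₅)
    (hgrow : ∀ u v : V,
      |A u v| ≤ c₄ + c₅ * (‖u‖ ^ r + ‖v‖ ^ (r + 1) + ‖j u‖ ^ 2 + ‖j v‖ ^ 2))
    (lam : ℝ) (hlam : max (c₃ / 2) 0 ≤ lam)
    (x : H) (xs : ℕ → V) (hs : ℕ → H)
    (hrep : ∀ n : ℕ, 1 ≤ n → ∀ v : V, A (xs n) v = ⟪hs n, j v⟫)
    (hres : ∀ n : ℕ, 1 ≤ n →
      j (xs n) + (1 / (n : ℝ)) • (lam • j (xs n) - hs n) = x) :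
    (∃ M : ℝ, ∀ n : ℕ, 1 ≤ n → ‖j (xs n)‖ ≤ M) ∧
      Tendsto
        (fun n : ℕ => ⨆ v : {v : V // ‖v‖ ≤ 1}, |⟪x - j (xs n), j (v : V)⟫|)
        atTop (nhds 0) := by
  have hlam' : c₃ / 2 ≤ lam := le_of_max_le_left hlam
  have hstep : ∀ n : ℕ, 1 ≤ n → 0 < 1 / (n : ℝ) ∧ 1 / (n : ℝ) ≤ 1 := fun n hn =>
    ⟨by positivity, by rw [div_le_one (by positivity)]; exact_mod_cast hn⟩
  set M := ‖x‖ + √(|c₁| / 2)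
  have hbound : ∀ n, 1 ≤ n → ‖j (xs n)‖ ≤ M := fun n hn =>
    norm_le_of_resolvent (hrep n hn) (hres n hn) (hcoer _) hlam' hc₂.le (hstep n hn).1.le
      (hstep n hn).2
  have hgrowth : (fun n => ‖xs n‖ ^ (r + 1)) =O[atTop] (fun n : ℕ => (n : ℝ)) := by
    refine IsBigO.of_bound ((‖x‖ ^ 2 / 2 + |c₁|) / c₂) ?_
    filter_upwards [eventually_ge_atTop 1] with n hn
    have h := rpow_norm_le_of_resolvent (hrep n hn) (hres n hn) (hcoer _) hlam' hc₂
      (hstep n hn).1 (hstep n hn).2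
    rw [Real.norm_of_nonneg (by positivity), Real.norm_natCast]
    rwa [mul_one_div, div_div_eq_mul_div, mul_div_right_comm] at h
  set C := |lam| * M * ‖j‖ + |c₄| + c₅ * (1 + M ^ 2 + ‖j‖ ^ 2)
  have hsmall : (fun n => C + c₅ * ‖xs n‖ ^ r) =o[atTop] (fun n : ℕ => (n : ℝ)) :=
    (isLittleO_const_id_atTop C |>.comp_tendsto tendsto_natCast_atTop_atTop).add
      ((isLittleO_rpow_of_isBigO_rpow_add_one hr.le (fun _ => norm_nonneg _) hgrowth)
        |>.const_mul_left c₅)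
  have : Nonempty {v : V // ‖v‖ ≤ 1} := ⟨⟨0, by simp⟩⟩
  refine ⟨⟨M, hbound⟩, tendsto_ciSup_abs_of_le ?_ (by simpa using hsmall.tendsto_div_nhds_zero)⟩
  filter_upwards [eventually_ge_atTop 1] with n hn v
  simpa [div_eq_inv_mul] using abs_inner_sub_le_of_resolvent (hrep n hn) (hres n hn) hc₅
    (by linarith) hgrow (hstep n hn).1.le (hbound n hn) v.2

/-- Combination of the estimates (bound_x_n) and (x_x_n) in the proof of
Lemma 2.4: the resolvent approximants `xₙ` of `x` are bounded in `H` and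
converge to `x` in the dual norm of `V*` (i.e. when tested uniformly against
the unit ball of `V`). -/
theorem resolvent_approximants_bounded_and_converge
    {H V : Type*}
    [NormedAddCommGroup H] [InnerProductSpace ℝ H] [CompleteSpace H]
    [NormedAddCommGroup V] [NormedSpace ℝ V] [CompleteSpace V]
    (j : V →L[ℝ] H) (hj_inj : Function.Injective j) (hj_dense : DenseRange j)
    (A : V → StrongDual ℝ V)
    (r c₁ c₂ c₃ : ℝ) (hr : 0 < r) (hc₂ : 0 < c₂)
    (hcoer : ∀ v : V, 2 * A v v ≤ c₁ - c₂ * ‖v‖ ^ (r + 1) + c₃ * ‖j v‖ ^ 2)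
    (c₄ c₅ : ℝ) (hc₅ : 0 ≤ c₅)
    (hgrow : ∀ u v : V,
      |A u v| ≤ c₄ + c₅ * (‖u‖ ^ r + ‖v‖ ^ (r + 1) + ‖j u‖ ^ 2 + ‖j v‖ ^ 2))
    (lam : ℝ) (hlam : max (c₃ / 2) 0 ≤ lam)
    (x : H) (xs : ℕ → V) (hs : ℕ → H)
    (hrep : ∀ n : ℕ, 1 ≤ n → ∀ v : V, A (xs n) v = ⟪hs n, j v⟫)
    (hres : ∀ n : ℕ, 1 ≤ n →
      j (xs n) + (1 / (n : ℝ)) • (lam • j (xs n) - hs n) = x) :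
    (∃ M : ℝ, ∀ n : ℕ, 1 ≤ n → ‖j (xs n)‖ ≤ M) ∧
      Tendsto
        (fun n : ℕ => ⨆ v : {v : V // ‖v‖ ≤ 1}, |⟪x - j (xs n), j (v : V)⟫|)
        atTop (nhds 0) :=
  resolvent_approximants_bounded_and_converge_general j A r c₁ c₂ c₃ hr hc₂ hcoer c₄ c₅ hc₅ hgrow
    lam hlam x xs hs hrep hres
end
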